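/- arXiv:1805.02430 — 3 statements merged into one kernel-verified Lean document; each statement's English description precedes it below -/
import Mathlib

section
/- Let b, c, Y, θ be real satisfying Y² − 2cY·cos θ + c² − 2b²(1 − cos θ) = 0, and set z = cY − b². Then the two roots of the quadratic α² − (Y² + c² − 2b²)α + z² = 0 are z·(cos θ + i·sin θ) and z·(cos θ − i·sin θ), i.e. as complex numbers they equal z·e^{±iθ}. -/
open Complex in
theorem quadratic_roots_exp (b c Y θ z : ℝ)
    (hconstraint : Y ^ 2 - 2 * c * Y * Real.cos θ + c ^ 2 - 2 * b ^ 2 * (1 - Real.cos θ) = 0)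
    (hz : z = c * Y - b ^ 2) :
    ∀ α : ℂ,
      α ^ 2 - ((Y : ℂ) ^ 2 + (c : ℂ) ^ 2 - 2 * (b : ℂ) ^ 2) * α + (z : ℂ) ^ 2 = 0 ↔
        α = (z : ℂ) * Complex.exp ((θ : ℂ) * Complex.I) ∨
        α = (z : ℂ) * Complex.exp (-((θ : ℂ) * Complex.I)) := by
  intro α
  have hkey : ((Y : ℂ) ^ 2 + (c : ℂ) ^ 2 - 2 * (b : ℂ) ^ 2)
      = 2 * (z : ℂ) * Complex.cos (θ : ℂ) := by
    have h0 : ((Y ^ 2 - 2 * c * Y * Real.cos θ + c ^ 2 - 2 * b ^ 2 * (1 - Real.cos θ) : ℝ) : ℂ)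
        = 0 := by exact_mod_cast congrArg (fun x : ℝ => (x : ℂ)) hconstraint
    push_cast [Complex.ofReal_cos] at h0 ⊢
    rw [hz]
    push_cast
    linear_combination h0
  have h1 : Complex.exp ((θ : ℂ) * Complex.I)
      = Complex.cos (θ : ℂ) + Complex.sin (θ : ℂ) * Complex.I := Complex.exp_mul_I (θ : ℂ)
  have h2 : Complex.exp (-((θ : ℂ) * Complex.I))
      = Complex.cos (θ : ℂ) - Complex.sin (θ : ℂ) * Complex.I := by
    have : -((θ : ℂ) * Complex.I) = (-(θ : ℂ)) * Complex.I := by ring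
    rw [this, Complex.exp_mul_I, Complex.cos_neg, Complex.sin_neg]
    ring
  have hpyth := Complex.sin_sq_add_cos_sq (θ : ℂ)
  have hfac : α ^ 2 - ((Y : ℂ) ^ 2 + (c : ℂ) ^ 2 - 2 * (b : ℂ) ^ 2) * α + (z : ℂ) ^ 2
      = (α - (z : ℂ) * Complex.exp ((θ : ℂ) * Complex.I))
        * (α - (z : ℂ) * Complex.exp (-((θ : ℂ) * Complex.I))) := by
    rw [h1, h2]
    linear_combination (-α) * hkey - (z : ℂ) ^ 2 * hpyth + (z : ℂ) ^ 2 * Complex.sin (θ : ℂ) ^ 2 * Complex.I_sq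
  rw [hfac, mul_eq_zero, sub_eq_zero, sub_eq_zero]
end

section
/- Let b, c, Y, θ ∈ ℝ with sin θ ≠ 0 and Y² − 2cY·cos θ + c² − 2b²(1 − cos θ) = 0; set z = cY − b² and assume z ≠ 0. Define a sequence (Δ_m) by Δ_1 = Y² − b², Δ_2 = Y⁴ − 3Y²b² + 2Yb²c + b⁴ − b²c², and Δ_{m+1} = (Y² + c² − 2b²)Δ_m − z²Δ_{m−1} for m ≥ 2. Then for all m ≥ 1, Δ_m = z^{m−1} · (z·sin((m+1)θ) + (b² − c²)·sin(mθ)) / sin θ. -/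
/-!
The constraint says exactly that `Y ^ 2 + c ^ 2 - 2 * b ^ 2 = 2 * z * cos θ`. Because of the
Chebyshev identity `sin ((x + 2) θ) = 2 cos θ sin ((x + 1) θ) - sin (x θ)`, every sequence
`z ^ m * (A * sin ((m + 1) θ) + B * sin (m θ))` solves `u (m + 1) = 2 z cos θ u m - z ^ 2 u (m - 1)`,
the recurrence of `Δ`; the closed form also matches `Δ 1` and `Δ 2`, and a second-order linear
recurrence is determined by two initial values.
-/

open Real

theorem LinearRecurrence.eq_of_order_two {R : Type*} [CommRing R] (p q : R) {u v : ℕ → R}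
    (hu : ∀ n, u (n + 2) = p * u (n + 1) - q * u n)
    (hv : ∀ n, v (n + 2) = p * v (n + 1) - q * v n)
    (h0 : u 0 = v 0) (h1 : u 1 = v 1) : u = v := by
  let E : LinearRecurrence R := ⟨2, ![-q, p]⟩
  have hsol : ∀ w : ℕ → R, (∀ n, w (n + 2) = p * w (n + 1) - q * w n) → E.IsSolution w :=
    fun w hw n => by
      simp only [hw, Fin.sum_univ_two, Fin.isValue, Matrix.cons_val_zero, Fin.coe_ofNat_eq_mod,
        Nat.zero_mod, add_zero, neg_mul, Matrix.cons_val_one, Matrix.cons_val_fin_one, Nat.mod_succ, E]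
      ring
  refine (E.eq_iff_eqOn_range_order u v (hsol u hu) (hsol v hv)).2 fun n hn => ?_
  have : n < 2 := Finset.mem_range.1 hn
  interval_cases n <;> assumption

theorem sin_add_two_mul (x θ : ℝ) :
    sin ((x + 2) * θ) = 2 * cos θ * sin ((x + 1) * θ) - sin (x * θ) := by
  rw [show (x + 2) * θ = (x + 1) * θ + θ by ring, show x * θ = (x + 1) * θ - θ by ring,
    sin_add, sin_sub]
  ring

noncomputable def sinComb (z d θ x : ℝ) : ℝ :=
  z * sin ((x + 1) * θ) + d * sin (x * θ)

noncomputable def scaledSinComb (z d θ : ℝ) (m : ℕ) : ℝ :=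
  z ^ (m - 1) * sinComb z d θ m / sin θ

section scaledSinComb

variable {z d θ : ℝ}

theorem sinComb_add_two (x : ℝ) :
    sinComb z d θ (x + 2) = 2 * cos θ * sinComb z d θ (x + 1) - sinComb z d θ x := by
  simp only [sinComb]
  rw [show x + 2 + 1 = (x + 1) + 2 by ring, sin_add_two_mul, sin_add_two_mul]
  ring

theorem scaledSinComb_add_three (n : ℕ) :
    scaledSinComb z d θ (n + 3) =
      2 * z * cos θ * scaledSinComb z d θ (n + 2) - z ^ 2 * scaledSinComb z d θ (n + 1) := by
  simp only [scaledSinComb, Nat.add_sub_cancel]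
  push_cast
  rw [show (n : ℝ) + 3 = (n + 1) + 2 by ring, sinComb_add_two, show (n : ℝ) + 1 + 1 = n + 2 by ring]
  ring

theorem scaledSinComb_one (hθ : sin θ ≠ 0) : scaledSinComb z d θ 1 = 2 * z * cos θ + d := by
  simp only [scaledSinComb, sinComb, Nat.sub_self, pow_zero, Nat.cast_one, one_add_one_eq_two,
    sin_two_mul, one_mul]
  field_simp

theorem scaledSinComb_two (hθ : sin θ ≠ 0) :
    scaledSinComb z d θ 2 = 2 * z * cos θ * scaledSinComb z d θ 1 - z ^ 2 := by
  have h : sinComb z d θ 2 = 2 * cos θ * sinComb z d θ 1 - z * sin θ := by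
    simpa [sinComb, one_add_one_eq_two] using sinComb_add_two (z := z) (d := d) (θ := θ) 0
  simp only [scaledSinComb, Nat.cast_ofNat, Nat.cast_one, h]
  field_simp
  ring

end scaledSinComb

theorem closed_form_even_general (b c Y θ z : ℝ) (hθ : Real.sin θ ≠ 0)
    (hconstraint : Y ^ 2 - 2 * c * Y * Real.cos θ + c ^ 2 - 2 * b ^ 2 * (1 - Real.cos θ) = 0)
    (hz : z = c * Y - b ^ 2)
    (Δ : ℕ → ℝ)
    (h1 : Δ 1 = Y ^ 2 - b ^ 2)
    (h2 : Δ 2 = Y ^ 4 - 3 * Y ^ 2 * b ^ 2 + 2 * Y * b ^ 2 * c + b ^ 4 - b ^ 2 * c ^ 2)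
    (hrec : ∀ m : ℕ, 2 ≤ m →
      Δ (m + 1) = (Y ^ 2 + c ^ 2 - 2 * b ^ 2) * Δ m - z ^ 2 * Δ (m - 1)) :
    ∀ m : ℕ, 1 ≤ m →
      Δ m = z ^ (m - 1) *
        (z * Real.sin (((m : ℝ) + 1) * θ) + (b ^ 2 - c ^ 2) * Real.sin (m * θ)) / Real.sin θ := by
  have hS : Y ^ 2 + c ^ 2 - 2 * b ^ 2 = 2 * z * cos θ := by
    linear_combination hconstraint - 2 * cos θ * hz
  have hΔ1 : Δ 1 = scaledSinComb z (b ^ 2 - c ^ 2) θ 1 := by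
    rw [h1, scaledSinComb_one hθ]
    linear_combination hS
  have hΔ2 : Δ 2 = scaledSinComb z (b ^ 2 - c ^ 2) θ 2 := by
    rw [h2, scaledSinComb_two hθ, ← hΔ1, h1, ← hS, hz]
    ring
  have hshift := LinearRecurrence.eq_of_order_two (2 * z * cos θ) (z ^ 2)
    (u := fun n => Δ (n + 1)) (v := fun n => scaledSinComb z (b ^ 2 - c ^ 2) θ (n + 1))
    (fun n => by rw [← hS]; exact hrec (n + 2) (by omega)) scaledSinComb_add_three hΔ1 hΔ2
  intro m hm
  obtain ⟨n, rfl⟩ := Nat.exists_eq_add_of_le' hm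
  exact congrFun hshift n

theorem closed_form_even (b c Y θ z : ℝ) (hθ : Real.sin θ ≠ 0)
    (hconstraint : Y ^ 2 - 2 * c * Y * Real.cos θ + c ^ 2 - 2 * b ^ 2 * (1 - Real.cos θ) = 0)
    (hz : z = c * Y - b ^ 2) (hz0 : z ≠ 0)
    (Δ : ℕ → ℝ)
    (h1 : Δ 1 = Y ^ 2 - b ^ 2)
    (h2 : Δ 2 = Y ^ 4 - 3 * Y ^ 2 * b ^ 2 + 2 * Y * b ^ 2 * c + b ^ 4 - b ^ 2 * c ^ 2)
    (hrec : ∀ m : ℕ, 2 ≤ m →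
      Δ (m + 1) = (Y ^ 2 + c ^ 2 - 2 * b ^ 2) * Δ m - z ^ 2 * Δ (m - 1)) :
    ∀ m : ℕ, 1 ≤ m →
      Δ m = z ^ (m - 1) *
        (z * Real.sin (((m : ℝ) + 1) * θ) + (b ^ 2 - c ^ 2) * Real.sin (m * θ)) / Real.sin θ :=
  closed_form_even_general b c Y θ z hθ hconstraint hz Δ h1 h2 hrec
end

section
/- Let b, c, Y, θ ∈ ℝ with sin θ ≠ 0, Y² − 2cY·cos θ + c² − 2b²(1 − cos θ) = 0, z = cY − b², and b(Y − c) ≠ 0. Then with R = z(2(bY − cd)cos θ + (d − b)Y) and S = z²(bY − cd) for a real parameter d, the combination (R·Δ_m − S·Δ_{m−1})/(b(Y − c)) where Δ_m = z^m(Y·sin((m+1)θ) − c·sin(mθ))/sin θ equals K·Δ_{m+1} + L·z·Δ_m with K = (bY − cd)/(b(Y − c)) and L = (d − b)Y/(b(Y − c)). -/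
theorem corner_reduction (b c d Y θ z : ℝ) (hθ : Real.sin θ ≠ 0)
    (hconstraint : Y ^ 2 - 2 * c * Y * Real.cos θ + c ^ 2 - 2 * b ^ 2 * (1 - Real.cos θ) = 0)
    (hz : z = c * Y - b ^ 2)
    (hb : b * (Y - c) ≠ 0)
    (R S K L : ℝ)
    (hR : R = z * (2 * (b * Y - c * d) * Real.cos θ + (d - b) * Y))
    (hS : S = z ^ 2 * (b * Y - c * d))
    (hK : K = (b * Y - c * d) / (b * (Y - c)))
    (hL : L = (d - b) * Y / (b * (Y - c)))
    (Δ : ℕ → ℝ)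
    (hΔ : ∀ m : ℕ, Δ m =
      z ^ m * (Y * Real.sin (((m : ℝ) + 1) * θ) - c * Real.sin (m * θ)) / Real.sin θ) :
    ∀ m : ℕ, 1 ≤ m →
      (R * Δ m - S * Δ (m - 1)) / (b * (Y - c)) = K * Δ (m + 1) + L * z * Δ m := by
  rintro m hm
  obtain ⟨k, rfl⟩ : ∃ k, m = k + 1 := ⟨m - 1, (Nat.succ_pred_eq_of_pos hm).symm⟩
  simp only [Nat.add_sub_cancel]
  rw [hΔ, hΔ, hΔ, hR, hS, hK, hL]
  push_cast
  have key : ∀ x : ℝ, Real.sin (x + (θ + θ)) = 2 * Real.cos θ * Real.sin (x + θ) - Real.sin x := by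
    intro x
    have h := Real.sin_sq_add_cos_sq θ
    simp only [Real.sin_add, Real.cos_add]
    linear_combination (-Real.sin x) * h
  have e1 : ((k : ℝ) + 1 + 1 + 1) * θ = (k * θ + θ) + (θ + θ) := by ring
  have e2 : ((k : ℝ) + 1 + 1) * θ = k * θ + (θ + θ) := by ring
  have e3 : ((k : ℝ) + 1) * θ = k * θ + θ := by ring
  have e4 : (k : ℝ) * θ + θ + θ = k * θ + (θ + θ) := by ring
  rw [e1, e2, key, key, e4, key, e3]
  field_simp
  ring
end
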